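/- For every T > 0, m ≥ 1, C > 0, and R > 0, the function (r, z) ↦ r^{-1-m/2}·e^{-C|z|²/r}·|z| restricted to (0, T/2] × B(0,R) ⊂ ℝ × ℝ^m is integrable with respect to the product of Lebesgue measures, with ∫₀^{T/2} ∫_{B(0,R)} r^{-1-m/2} e^{-C|z|²/r} |z| dz dr < ∞. -/
import Mathlib

open MeasureTheory Set

lemma exp_neg_le_rpow' {k x : ℝ} (hk : 0 < k) (hx : 0 < x) :
    Real.exp (-x) ≤ (k ^ k * Real.exp (-k)) * x ^ (-k) := by
  have h1 : Real.log (x / k) ≤ x / k - 1 := Real.log_le_sub_one_of_pos (by positivity)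
  rw [Real.log_div hx.ne' hk.ne'] at h1
  have h2 : Real.log x * k - x ≤ Real.log k * k - k := by
    have := mul_le_mul_of_nonneg_right h1 hk.le
    rw [sub_mul, sub_mul, div_mul_cancel₀ _ hk.ne', one_mul] at this
    linarith
  rw [Real.rpow_def_of_pos hx, Real.rpow_def_of_pos hk, ← Real.exp_add, ← Real.exp_add,
    Real.exp_le_exp]
  linarith

open Metric in
lemma lintegral_ball_rpow_lt_top' (m : ℕ) (hm : 1 ≤ m) (R s : ℝ) (hR : 0 < R)
    (hs : -(m : ℝ) < s) (hs0 : s < 0) :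
    ∫⁻ z in Metric.ball (0 : EuclideanSpace ℝ (Fin m)) R, ENNReal.ofReal (‖z‖ ^ s) < ⊤ := by
  set E := EuclideanSpace ℝ (Fin m)
  have h2 : (0:ℝ) < 2⁻¹ := by norm_num
  set A : ℕ → Set E := fun n => ball (0:E) (R * 2⁻¹ ^ n) \ ball 0 (R * 2⁻¹ ^ (n + 1)) with hA
  have hcover : ball (0:E) R ⊆ {0} ∪ ⋃ n, A n := by
    intro z hz
    rw [mem_ball_zero_iff] at hz
    rcases eq_or_ne z 0 with h0 | h0
    · exact Or.inl (by simp [h0])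
    have hz0 : 0 < ‖z‖ := norm_pos_iff.2 h0
    have hex : ∃ n : ℕ, R * 2⁻¹ ^ n ≤ ‖z‖ := by
      obtain ⟨n, hn⟩ := exists_pow_lt_of_lt_one (show (0:ℝ) < ‖z‖ / R by positivity)
        (show (2⁻¹:ℝ) < 1 by norm_num)
      exact ⟨n, by rw [mul_comm]; exact (le_div_iff₀ hR).mp hn.le⟩
    set n := Nat.find hex with hn
    have hspec : R * 2⁻¹ ^ n ≤ ‖z‖ := Nat.find_spec hex
    have hn0 : n ≠ 0 := by
      intro h
      rw [h] at hspec; simp at hspec; linarith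
    obtain ⟨p, hp⟩ := Nat.exists_eq_succ_of_ne_zero hn0
    refine Or.inr (mem_iUnion.2 ⟨p, ?_, ?_⟩)
    · rw [mem_ball_zero_iff]
      have := Nat.find_min hex (m := p) (by omega)
      linarith [lt_of_not_ge this]
    · rw [mem_ball_zero_iff]
      push_neg
      rw [← Nat.succ_eq_add_one, ← hp]
      exact hspec
  have B := (volume : Measure E) (ball 0 1)
  calc ∫⁻ z in ball (0:E) R, ENNReal.ofReal (‖z‖ ^ s)
      ≤ ∫⁻ z in ({0} ∪ ⋃ n, A n), ENNReal.ofReal (‖z‖ ^ s) := lintegral_mono_set hcover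
    _ ≤ (∫⁻ z in ({0} : Set E), ENNReal.ofReal (‖z‖ ^ s)) +
        ∫⁻ z in (⋃ n, A n), ENNReal.ofReal (‖z‖ ^ s) := lintegral_union_le _ _ _
    _ ≤ 0 + ∑' n, ∫⁻ z in A n, ENNReal.ofReal (‖z‖ ^ s) := by
        gcongr
        · rw [lintegral_singleton]
          simp [Real.zero_rpow hs0.ne]
        · exact lintegral_iUnion_le _ _
    _ ≤ ∑' n, ENNReal.ofReal ((R * 2⁻¹ ^ (n+1)) ^ s) *
          (ENNReal.ofReal ((R * 2⁻¹ ^ n) ^ m) * volume (ball (0:E) 1)) := by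
        rw [zero_add]
        refine ENNReal.tsum_le_tsum fun n => ?_
        calc ∫⁻ z in A n, ENNReal.ofReal (‖z‖ ^ s)
            ≤ ∫⁻ _ in A n, ENNReal.ofReal ((R * 2⁻¹ ^ (n+1)) ^ s) := by
              refine setLIntegral_mono' (by
                exact measurableSet_ball.diff measurableSet_ball) fun z hz => ?_
              refine ENNReal.ofReal_le_ofReal ?_
              refine Real.rpow_le_rpow_of_nonpos (by positivity) ?_ hs0.le
              have := hz.2
              rw [mem_ball_zero_iff] at this
              exact not_lt.mp this
          _ = ENNReal.ofReal ((R * 2⁻¹ ^ (n+1)) ^ s) * volume (A n) := setLIntegral_const _ _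
          _ ≤ ENNReal.ofReal ((R * 2⁻¹ ^ (n+1)) ^ s) *
              (ENNReal.ofReal ((R * 2⁻¹ ^ n) ^ m) * volume (ball (0:E) 1)) := by
              gcongr
              calc volume (A n) ≤ volume (ball (0:E) (R * 2⁻¹ ^ n)) :=
                    measure_mono diff_subset
                _ = ENNReal.ofReal ((R * 2⁻¹ ^ n) ^ m) * volume (ball (0:E) 1) := by
                    haveI : Nonempty (Fin m) := ⟨⟨0, hm⟩⟩
                    rw [Measure.addHaar_ball (volume : Measure E) (0:E) (by positivity : (0:ℝ) ≤ R * 2⁻¹ ^ n)]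
                    simp [E, finrank_euclideanSpace_fin]
    _ < ⊤ := by
        have key : ∀ n : ℕ, (R * 2⁻¹ ^ (n+1)) ^ s * ((R * 2⁻¹ ^ n) ^ m) =
            (R ^ s * R ^ m * 2⁻¹ ^ s) * ((2⁻¹:ℝ) ^ (s + (m:ℝ))) ^ n := by
          intro n
          have e1 : ((2⁻¹:ℝ) ^ (n+1)) ^ s * ((2⁻¹:ℝ) ^ (n*m)) =
              2⁻¹ ^ s * ((2⁻¹:ℝ) ^ (s + (m:ℝ))) ^ n := by
            rw [← Real.rpow_natCast (2⁻¹:ℝ) (n+1), ← Real.rpow_mul h2.le,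
                ← Real.rpow_natCast (2⁻¹:ℝ) (n*m),
                ← Real.rpow_natCast ((2⁻¹:ℝ) ^ (s + (m:ℝ))) n, ← Real.rpow_mul h2.le,
                ← Real.rpow_add h2, ← Real.rpow_add h2]
            congr 1
            push_cast
            ring
          rw [Real.mul_rpow hR.le (by positivity), mul_pow, ← pow_mul, mul_mul_mul_comm, e1]
          ring
        have step : ∀ n : ℕ, ENNReal.ofReal ((R * 2⁻¹ ^ (n+1)) ^ s) *
            (ENNReal.ofReal ((R * 2⁻¹ ^ n) ^ m) * volume (ball (0:E) 1)) =
            (ENNReal.ofReal (R ^ s * R ^ m * 2⁻¹ ^ s) * volume (ball (0:E) 1)) *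
              (ENNReal.ofReal ((2⁻¹:ℝ) ^ (s + (m:ℝ)))) ^ n := by
          intro n
          rw [← mul_assoc, ← ENNReal.ofReal_mul (by positivity), key n,
            ENNReal.ofReal_mul (by positivity), ← ENNReal.ofReal_pow (by positivity)]
          ring
        simp_rw [step]
        rw [ENNReal.tsum_mul_left, ENNReal.tsum_geometric]
        have ht : ENNReal.ofReal ((2⁻¹:ℝ) ^ (s + (m:ℝ))) < 1 :=
          ENNReal.ofReal_lt_one.mpr
            (Real.rpow_lt_one (by norm_num) (by norm_num) (by linarith))
        refine ENNReal.mul_lt_top ?_ (ENNReal.inv_lt_top.mpr (tsub_pos_of_lt ht))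
        exact ENNReal.mul_lt_top ENNReal.ofReal_lt_top measure_ball_lt_top

lemma lintegral_Ioc_rpow_lt_top' {a e : ℝ} (ha : 0 < a) (he : -1 < e) :
    ∫⁻ r in Ioc (0 : ℝ) a, ENNReal.ofReal (r ^ e) < ⊤ := by
  have hInt : IntegrableOn (fun r : ℝ => r ^ e) (Ioc 0 a) :=
    (intervalIntegrable_iff_integrableOn_Ioc_of_le ha.le).mp
      (intervalIntegral.intervalIntegrable_rpow' he)
  exact lt_of_le_of_lt (lintegral_mono fun r => Real.ofReal_le_enorm _) hInt.2

theorem singular_kernel_integrable (T : ℝ) (hT : 0 < T) (m : ℕ) (hm : 1 ≤ m)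
    (C R : ℝ) (hC : 0 < C) (hR : 0 < R) :
    MeasureTheory.IntegrableOn
      (fun q : ℝ × EuclideanSpace ℝ (Fin m) =>
        q.1 ^ (-1 - (m : ℝ) / 2) * Real.exp (-C * ‖q.2‖ ^ 2 / q.1) * ‖q.2‖)
      (Set.Ioc 0 (T / 2) ×ˢ Metric.ball 0 R) ∧
    ∫⁻ r in Set.Ioc (0 : ℝ) (T / 2), ∫⁻ z in Metric.ball (0 : EuclideanSpace ℝ (Fin m)) R,
        ENNReal.ofReal (r ^ (-1 - (m : ℝ) / 2) * Real.exp (-C * ‖z‖ ^ 2 / r) * ‖z‖) < ⊤ := by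
  have hm' : (1 : ℝ) ≤ m := by exact_mod_cast hm
  set E := EuclideanSpace ℝ (Fin m)
  set F : ℝ × E → ℝ := fun q =>
    q.1 ^ (-1 - (m : ℝ) / 2) * Real.exp (-C * ‖q.2‖ ^ 2 / q.1) * ‖q.2‖ with hF
  set S : Set (ℝ × E) := Ioc (0 : ℝ) (T / 2) ×ˢ Metric.ball (0 : E) R with hSdef
  set k : ℝ := (m : ℝ) / 2 + 1 / 4 with hk
  have hkpos : 0 < k := by positivity
  set M : ℝ := k ^ k * Real.exp (-k) with hM
  have hM0 : 0 ≤ M := by positivity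
  set c : ℝ := M * C ^ (-k) with hc
  have hc0 : 0 ≤ c := by positivity
  have hFm : Measurable F := by fun_prop
  -- pointwise domination
  have hdom : ∀ q : ℝ × E, q.1 ∈ Ioc (0 : ℝ) (T / 2) →
      F q ≤ c * (q.1 ^ (-3/4 : ℝ) * ‖q.2‖ ^ ((1 : ℝ) / 2 - m)) := by
    rintro ⟨r, z⟩ ⟨hr0, hrT⟩
    show r ^ (-1 - (m : ℝ) / 2) * Real.exp (-C * ‖z‖ ^ 2 / r) * ‖z‖ ≤
      c * (r ^ (-3/4 : ℝ) * ‖z‖ ^ ((1 : ℝ) / 2 - m))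
    replace hr0 : (0:ℝ) < r := hr0
    rcases eq_or_ne z 0 with h0 | h0
    · simp only [h0, norm_zero, mul_zero]
      positivity
    · have hz : 0 < ‖z‖ := norm_pos_iff.2 h0
      have hx : 0 < C * ‖z‖ ^ 2 / r := by positivity
      have hneg : -C * ‖z‖ ^ 2 / r = -(C * ‖z‖ ^ 2 / r) := by ring
      rw [hneg]
      calc r ^ (-1 - (m : ℝ) / 2) * Real.exp (-(C * ‖z‖ ^ 2 / r)) * ‖z‖
          ≤ r ^ (-1 - (m : ℝ) / 2) * (M * (C * ‖z‖ ^ 2 / r) ^ (-k)) * ‖z‖ := by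
            gcongr
            exact exp_neg_le_rpow' hkpos hx
        _ = c * (r ^ (-3/4 : ℝ) * ‖z‖ ^ ((1 : ℝ) / 2 - m)) := by
            have h1 : r ^ (-1 - (m : ℝ) / 2) * r ^ k = r ^ (-3/4 : ℝ) := by
              rw [← Real.rpow_add hr0]; congr 1; rw [hk]; ring
            have h2 : ‖z‖ ^ ((2 : ℝ) * -k) * ‖z‖ = ‖z‖ ^ ((1 : ℝ) / 2 - m) := by
              have h3 := Real.rpow_add hz ((2 : ℝ) * -k) 1
              rw [Real.rpow_one] at h3
              rw [← h3]; congr 1; rw [hk]; ring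
            have hxk : (C * ‖z‖ ^ 2 / r) ^ (-k) = C ^ (-k) * ‖z‖ ^ ((2:ℝ) * -k) * r ^ k := by
              rw [Real.div_rpow (by positivity) hr0.le, Real.mul_rpow hC.le (by positivity),
                ← Real.rpow_natCast ‖z‖ 2, ← Real.rpow_mul (norm_nonneg z),
                Real.rpow_neg hr0.le k, div_inv_eq_mul]
              norm_num
            rw [hxk]
            calc r ^ (-1 - (m : ℝ) / 2) * (M * (C ^ (-k) * ‖z‖ ^ ((2:ℝ) * -k) * r ^ k)) * ‖z‖
                = (M * C ^ (-k)) * ((r ^ (-1 - (m : ℝ) / 2) * r ^ k) *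
                    (‖z‖ ^ ((2:ℝ) * -k) * ‖z‖)) := by ring
              _ = c * (r ^ (-3/4 : ℝ) * ‖z‖ ^ ((1 : ℝ) / 2 - m)) := by rw [h1, h2, hc]
  -- finiteness of the two 1D integrals
  have hφ : ∫⁻ r in Ioc (0 : ℝ) (T / 2), ENNReal.ofReal (r ^ (-3/4 : ℝ)) < ⊤ :=
    lintegral_Ioc_rpow_lt_top' (by linarith) (by norm_num)
  have hψ : ∫⁻ z in Metric.ball (0 : E) R, ENNReal.ofReal (‖z‖ ^ ((1 : ℝ) / 2 - m)) < ⊤ :=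
    lintegral_ball_rpow_lt_top' m hm R _ hR (by linarith) (by linarith)
  have hSm : MeasurableSet S := measurableSet_Ioc.prod measurableSet_ball
  have hprod : (volume : Measure (ℝ × E)).restrict S =
      ((volume : Measure ℝ).restrict (Ioc 0 (T / 2))).prod
        ((volume : Measure E).restrict (Metric.ball 0 R)) := by
    rw [Measure.volume_eq_prod, Measure.prod_restrict]
  have hφm : Measurable fun r : ℝ => ENNReal.ofReal (r ^ (-3/4 : ℝ)) := by fun_prop
  have hψm : Measurable fun z : E => ENNReal.ofReal (‖z‖ ^ ((1 : ℝ) / 2 - m)) := by fun_prop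
  have key : ∫⁻ q in S, ENNReal.ofReal (F q) < ⊤ := by
    calc ∫⁻ q in S, ENNReal.ofReal (F q)
        ≤ ∫⁻ q in S, ENNReal.ofReal c *
            (ENNReal.ofReal (q.1 ^ (-3/4 : ℝ)) * ENNReal.ofReal (‖q.2‖ ^ ((1 : ℝ) / 2 - m))) := by
          refine lintegral_mono_ae ?_
          filter_upwards [ae_restrict_mem hSm] with q hq
          calc ENNReal.ofReal (F q)
              ≤ ENNReal.ofReal (c * (q.1 ^ (-3/4 : ℝ) * ‖q.2‖ ^ ((1 : ℝ) / 2 - m))) :=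
                ENNReal.ofReal_le_ofReal (hdom q hq.1)
            _ = _ := by
                rw [ENNReal.ofReal_mul hc0,
                  ENNReal.ofReal_mul (Real.rpow_nonneg (le_of_lt hq.1.1) _)]
      _ = ENNReal.ofReal c * ∫⁻ q in S,
            ENNReal.ofReal (q.1 ^ (-3/4 : ℝ)) * ENNReal.ofReal (‖q.2‖ ^ ((1 : ℝ) / 2 - m)) :=
          lintegral_const_mul' _ _ ENNReal.ofReal_ne_top
      _ = ENNReal.ofReal c * ((∫⁻ r in Ioc (0 : ℝ) (T / 2), ENNReal.ofReal (r ^ (-3/4 : ℝ))) *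
            ∫⁻ z in Metric.ball (0 : E) R, ENNReal.ofReal (‖z‖ ^ ((1 : ℝ) / 2 - m))) := by
          rw [hprod, lintegral_prod_mul hφm.aemeasurable hψm.aemeasurable]
      _ < ⊤ := ENNReal.mul_lt_top ENNReal.ofReal_lt_top (ENNReal.mul_lt_top hφ hψ)
  constructor
  · refine ⟨hFm.aestronglyMeasurable, ?_⟩
    have heq : ∫⁻ q in S, (‖F q‖₊ : ENNReal) = ∫⁻ q in S, ENNReal.ofReal (F q) := by
      refine lintegral_congr_ae ?_
      filter_upwards [ae_restrict_mem hSm] with q hq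
      exact Real.enorm_eq_ofReal (mul_nonneg (mul_nonneg
        (Real.rpow_nonneg hq.1.1.le _) (Real.exp_nonneg _)) (norm_nonneg _))
    show ∫⁻ q in S, (‖F q‖₊ : ENNReal) < ⊤
    rw [heq]; exact key
  · have heq : (∫⁻ r in Ioc (0 : ℝ) (T / 2), ∫⁻ z in Metric.ball (0 : E) R,
        ENNReal.ofReal (F (r, z))) = ∫⁻ q in S, ENNReal.ofReal (F q) := by
      rw [hprod, lintegral_prod _ hFm.ennreal_ofReal.aemeasurable]
    exact heq ▸ key
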